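/- There exists an absolute constant c > 0 such that for every prime p, every integer t ≥ 1, all integers a₁,…,a_t each nonzero modulo p, and every b ∈ [−1/2, 1/2]: if X₁,…,X_t are i.i.d. random bits with Pr[X_i = 0] = 1/2 + b and Pr[X_i = 1] = 1/2 − b, then the total variation distance between the distribution of (Σ_{i=1}^t a_i·X_i) mod p on ZMod p and the uniform distribution on ZMod p is at most √p · exp(−c·t·(1 − 4b²)/p²). -/

import Mathlib

open Finset

/-- Probability, under i.i.d. bits that are `0` (= `false`) with probability
`1/2 + b` and `1` (= `true`) with probability `1/2 - b`, of the event
`f u = a`. -/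
noncomputable def pushBProb {t : ℕ} {S : Type*} [DecidableEq S] (b : ℝ)
    (f : (Fin t → Bool) → S) (a : S) : ℝ :=
  ∑ u ∈ univ.filter (fun u => f u = a), ∏ i, (if u i then 1 / 2 - b else 1 / 2 + b)

namespace Stmt18Aux
open Complex Real

lemma norm_stdAddChar' {p : ℕ} [NeZero p] (x : ZMod p) : ‖ZMod.stdAddChar x‖ = 1 := by
  rw [ZMod.stdAddChar_apply, Circle.norm_coe]

lemma re_stdAddChar {p : ℕ} [NeZero p] (x : ZMod p) :
    (ZMod.stdAddChar x).re = Real.cos (2 * π * x.val / p) := by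
  rw [ZMod.stdAddChar_apply, ZMod.toCircle_apply]
  have : (2 * ↑π * I * ↑x.val / ↑p : ℂ) = ((2 * π * x.val / p : ℝ) : ℂ) * I := by
    push_cast; ring
  rw [this]
  exact Complex.exp_ofReal_mul_I_re _




lemma cos_bound {p k : ℕ} (hp : 2 ≤ p) (hk1 : 1 ≤ k) (hk2 : 2 * k ≤ p) :
    Real.cos (2 * π * k / p) ≤ 1 - 8 / (p : ℝ) ^ 2 := by
  have hp0 : (0:ℝ) < p := by positivity
  have hk0 : (1:ℝ) ≤ k := by exact_mod_cast hk1
  have h2k : 2 * (k:ℝ) ≤ p := by exact_mod_cast hk2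
  have hxabs : |2 * π * k / p| ≤ π := by
    rw [_root_.abs_of_nonneg (by positivity)]
    rw [div_le_iff₀ hp0]
    nlinarith [Real.pi_pos]
  have h := Real.cos_le_one_sub_mul_cos_sq hxabs
  have hpi := Real.pi_pos
  calc Real.cos (2 * π * k / p) ≤ 1 - 2 / π ^ 2 * (2 * π * k / p) ^ 2 := h
    _ = 1 - 8 * k ^ 2 / p ^ 2 := by field_simp; ring
    _ ≤ 1 - 8 / p ^ 2 := by
        have : (8:ℝ) / p ^ 2 ≤ 8 * k ^ 2 / p ^ 2 := by
          apply div_le_div_of_nonneg_right ?_ (by positivity)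
          nlinarith
        linarith

lemma cos_val_bound {p : ℕ} (hp : p.Prime) (m : ZMod p) (hm : m ≠ 0) :
    Real.cos (2 * π * (ZMod.val m) / p) ≤ 1 - 8 / (p : ℝ) ^ 2 := by
  haveI : NeZero p := ⟨hp.ne_zero⟩
  set k := m.val with hk
  have hk1 : 1 ≤ k := by
    rcases Nat.eq_zero_or_pos k with h | h
    · exact absurd ((ZMod.val_eq_zero m).mp h) hm
    · exact h
  have hkp : k < p := ZMod.val_lt m
  by_cases h2 : 2 * k ≤ p
  · exact cos_bound hp.two_le hk1 h2
  · have hks : ((p - k : ℕ) : ℝ) = (p : ℝ) - k := by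
      push_cast [Nat.cast_sub hkp.le]; ring
    have heq : (2 * π * k / p : ℝ) = 2 * π - 2 * π * ((p - k : ℕ) : ℝ) / p := by
      have hp0 : (p:ℝ) ≠ 0 := Nat.cast_ne_zero.mpr hp.ne_zero
      rw [hks]; field_simp; ring
    rw [heq, Real.cos_two_pi_sub]
    exact cos_bound hp.two_le (by omega) (by omega)

lemma factor_bound' {p : ℕ} [NeZero p] (hp : p.Prime) (m : ZMod p) (hm : m ≠ 0) {b : ℝ}
    (hb1 : -(1/2) ≤ b) (hb2 : b ≤ 1/2) :
    ‖((1/2 + b : ℝ) : ℂ) + ((1/2 - b : ℝ) : ℂ) * ZMod.stdAddChar m‖ ≤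
      Real.exp (-(2 * (1 - 4 * b ^ 2) / (p : ℝ) ^ 2)) := by
  set z := ZMod.stdAddChar m with hz
  have hzn : Complex.normSq z = 1 := by
    have h := norm_stdAddChar' (p := p) m
    rw [← Complex.sq_norm, ← hz] at *
    rw [h]; norm_num
  have hre : z.re ≤ 1 - 8 / (p:ℝ) ^ 2 := by
    rw [hz, re_stdAddChar]; exact cos_val_bound hp m hm
  have hsq : ‖((1/2 + b : ℝ) : ℂ) + ((1/2 - b : ℝ) : ℂ) * z‖ ^ 2
      = (1/2 + b)^2 + (1/2 - b)^2 + 2 * (1/2 + b) * (1/2 - b) * z.re := by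
    rw [Complex.sq_norm]
    have hzsq : z.re ^ 2 + z.im ^ 2 = 1 := by
      have h2 := Complex.normSq_apply z; nlinarith [hzn]
    simp only [Complex.normSq_apply, Complex.add_re, Complex.add_im, Complex.mul_re,
      Complex.mul_im, Complex.ofReal_re, Complex.ofReal_im]
    nlinarith [hzsq]
  have hp0 : (0:ℝ) < p := by exact_mod_cast hp.pos
  have hP : (0:ℝ) < (p:ℝ)^2 := by positivity
  have hab : 0 ≤ 2 * (1/2 + b) * (1/2 - b) := by nlinarith
  have key2 : ((1 - 4*(1-4*b^2)/(p:ℝ)^2) -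
      ((1/2+b)^2 + (1/2-b)^2 + 2*(1/2+b)*(1/2-b)*z.re)) * (p:ℝ)^2
      = ((1 - 8/(p:ℝ)^2 - z.re) * (p:ℝ)^2) * (2*(1/2+b)*(1/2-b)) := by
    field_simp; ring
  have hstep : (1/2+b)^2 + (1/2-b)^2 + 2*(1/2+b)*(1/2-b)*z.re
      ≤ 1 - 4*(1-4*b^2)/(p:ℝ)^2 := by
    have h1 : 0 ≤ ((1 - 8/(p:ℝ)^2 - z.re) * (p:ℝ)^2) * (2*(1/2+b)*(1/2-b)) :=
      mul_nonneg (mul_nonneg (by linarith) hP.le) hab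
    rw [← key2] at h1
    have := (mul_nonneg_iff_of_pos_right hP).mp h1
    linarith
  have hexp := Real.add_one_le_exp (-(4 * (1 - 4 * b ^ 2) / (p:ℝ) ^ 2))
  have key : ‖((1/2 + b : ℝ) : ℂ) + ((1/2 - b : ℝ) : ℂ) * z‖ ^ 2
      ≤ Real.exp (-(4 * (1 - 4 * b ^ 2) / (p:ℝ) ^ 2)) := by
    rw [hsq]; linarith
  have h2 : Real.exp (-(4 * (1 - 4 * b ^ 2) / (p:ℝ) ^ 2))
      = (Real.exp (-(2 * (1 - 4 * b ^ 2) / (p:ℝ) ^ 2))) ^ 2 := by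
    rw [← Real.exp_nat_mul]; ring_nf
  rw [h2] at key
  exact (pow_le_pow_iff_left₀ (norm_nonneg _) (Real.exp_pos _).le two_ne_zero).mp key

lemma addChar_map_sum {ι A M : Type*} [AddCommMonoid A] [CommMonoid M]
    (ψ : AddChar A M) (s : Finset ι) (g : ι → A) :
    ψ (∑ i ∈ s, g i) = ∏ i ∈ s, ψ (g i) := by
  classical
  induction s using Finset.induction with
  | empty => simp
  | insert _ _ h ih => simp [Finset.sum_insert h, Finset.prod_insert h, AddChar.map_add_eq_mul, ih]

lemma orth {p : ℕ} [NeZero p] (s : ZMod p) :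
    ∑ χ : ZMod p, ZMod.stdAddChar (χ * s) = if s = 0 then (p : ℂ) else 0 := by
  classical
  have := AddChar.sum_mulShift (R := ZMod p) (R' := ℂ) s (ZMod.isPrimitive_stdAddChar p)
  simpa [ZMod.card] using this

noncomputable def Fc (p : ℕ) [NeZero p] {t : ℕ} (a : Fin t → ℤ) (b : ℝ) (χ : ZMod p) : ℂ :=
  ∏ i, (((1/2 + b : ℝ) : ℂ) + ((1/2 - b : ℝ) : ℂ) * ZMod.stdAddChar (χ * ((a i : ZMod p))))

def fz (p : ℕ) {t : ℕ} (a : Fin t → ℤ) (u : Fin t → Bool) : ZMod p :=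
  ((∑ i, if u i then a i else 0 : ℤ) : ZMod p)

noncomputable def wc {t : ℕ} (b : ℝ) (u : Fin t → Bool) : ℂ :=
  ∏ i, (if u i then ((1/2 - b : ℝ) : ℂ) else ((1/2 + b : ℝ) : ℂ))

lemma lemB (p : ℕ) [NeZero p] {t : ℕ} (a : Fin t → ℤ) (b : ℝ) (χ : ZMod p) :
    ∑ u : Fin t → Bool, wc b u * ZMod.stdAddChar (χ * fz p a u) = Fc p a b χ := by
  classical
  have hfexp : ∀ u : Fin t → Bool, wc b u * ZMod.stdAddChar (χ * fz p a u)
      = ∏ i, ((if u i then ((1/2 - b : ℝ) : ℂ) else ((1/2 + b : ℝ) : ℂ)) *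
          ZMod.stdAddChar (χ * (((if u i then a i else 0 : ℤ) : ZMod p)))) := by
    intro u
    rw [Finset.prod_mul_distrib]
    congr 1
    rw [← addChar_map_sum]
    congr 1
    rw [fz]
    push_cast
    rw [Finset.mul_sum]
  have key := Finset.prod_univ_sum (fun _ : Fin t => (univ : Finset Bool))
    (fun i x => (if x then ((1/2 - b : ℝ) : ℂ) else ((1/2 + b : ℝ) : ℂ)) *
      ZMod.stdAddChar (χ * (((if x then a i else 0 : ℤ) : ZMod p))))
  rw [Fintype.piFinset_univ] at key
  rw [Finset.sum_congr rfl (fun u _ => hfexp u), ← key, Fc]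
  refine Finset.prod_congr rfl (fun i _ => ?_)
  rw [Fintype.sum_bool]
  norm_num
  ring

lemma lemA (p : ℕ) [NeZero p] {t : ℕ} (a : Fin t → ℤ) (b : ℝ) (v : ZMod p) :
    ((pushBProb b (fz p a) v : ℝ) : ℂ) =
      (p : ℂ)⁻¹ * ∑ χ : ZMod p, Fc p a b χ * ZMod.stdAddChar (-(χ * v)) := by
  classical
  have hp0 : (p : ℂ) ≠ 0 := Nat.cast_ne_zero.mpr (NeZero.ne p)
  have hmain : ∑ χ : ZMod p, Fc p a b χ * ZMod.stdAddChar (-(χ * v))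
      = ∑ u : Fin t → Bool, wc b u * (if fz p a u = v then (p : ℂ) else 0) := by
    calc ∑ χ : ZMod p, Fc p a b χ * ZMod.stdAddChar (-(χ * v))
        = ∑ χ : ZMod p, ∑ u : Fin t → Bool,
            wc b u * ZMod.stdAddChar (χ * fz p a u) * ZMod.stdAddChar (-(χ * v)) := by
          refine Finset.sum_congr rfl (fun χ _ => ?_)
          rw [← lemB p a b χ, Finset.sum_mul]
      _ = ∑ u : Fin t → Bool, ∑ χ : ZMod p,
            wc b u * ZMod.stdAddChar (χ * (fz p a u - v)) := by
          rw [Finset.sum_comm]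
          refine Finset.sum_congr rfl (fun u _ => Finset.sum_congr rfl (fun χ _ => ?_))
          rw [mul_assoc, ← AddChar.map_add_eq_mul]
          congr 2
          ring
      _ = ∑ u : Fin t → Bool, wc b u * (if fz p a u - v = 0 then (p : ℂ) else 0) := by
          refine Finset.sum_congr rfl (fun u _ => ?_)
          rw [← Finset.mul_sum, orth]
      _ = ∑ u : Fin t → Bool, wc b u * (if fz p a u = v then (p : ℂ) else 0) := by
          simp [sub_eq_zero]
  rw [hmain]
  have : ∑ u : Fin t → Bool, wc b u * (if fz p a u = v then (p : ℂ) else 0)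
      = (p : ℂ) * ∑ u ∈ univ.filter (fun u => fz p a u = v), wc b u := by
    rw [Finset.mul_sum, Finset.sum_filter]
    refine Finset.sum_congr rfl (fun u _ => ?_)
    split_ifs <;> ring
  rw [this, ← mul_assoc, inv_mul_cancel₀ hp0, one_mul, pushBProb]
  push_cast
  refine Finset.sum_congr rfl (fun u _ => ?_)
  rw [wc]
  refine Finset.prod_congr rfl (fun i _ => ?_)
  split_ifs <;> push_cast <;> ring

lemma Fc_zero (p : ℕ) [NeZero p] {t : ℕ} (a : Fin t → ℤ) (b : ℝ) : Fc p a b 0 = 1 := by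
  rw [Fc]
  refine Finset.prod_eq_one (fun i _ => ?_)
  rw [zero_mul, AddChar.map_zero_eq_one]
  push_cast; ring

lemma Fc_bound {p : ℕ} [NeZero p] (hp : p.Prime) {t : ℕ} {a : Fin t → ℤ}
    (ha : ∀ i, ((a i : ZMod p) ≠ 0)) {b : ℝ} (hb1 : -(1/2) ≤ b) (hb2 : b ≤ 1/2)
    {χ : ZMod p} (hχ : χ ≠ 0) :
    ‖Fc p a b χ‖ ≤ Real.exp (-(2 * t * (1 - 4 * b ^ 2) / (p : ℝ) ^ 2)) := by
  haveI : Fact p.Prime := ⟨hp⟩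
  rw [Fc, norm_prod]
  calc ∏ i, ‖((1/2 + b : ℝ) : ℂ) + ((1/2 - b : ℝ) : ℂ) * ZMod.stdAddChar (χ * ((a i : ZMod p)))‖
      ≤ ∏ _i : Fin t, Real.exp (-(2 * (1 - 4 * b ^ 2) / (p : ℝ) ^ 2)) := by
        refine Finset.prod_le_prod (fun i _ => norm_nonneg _) (fun i _ => ?_)
        exact factor_bound' hp _ (mul_ne_zero hχ (ha i)) hb1 hb2
    _ = Real.exp (-(2 * t * (1 - 4 * b ^ 2) / (p : ℝ) ^ 2)) := by
        rw [Finset.prod_const, Finset.card_univ, Fintype.card_fin, ← Real.exp_nat_mul]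
        ring_nf

lemma pointwise (p : ℕ) [NeZero p] {t : ℕ} (a : Fin t → ℤ) (b : ℝ) (v : ZMod p) :
    |pushBProb b (fz p a) v - 1 / (p : ℝ)| ≤
      (p : ℝ)⁻¹ * ∑ χ ∈ (univ : Finset (ZMod p)).erase 0, ‖Fc p a b χ‖ := by
  classical
  have h0 : (0 : ZMod p) ∈ (univ : Finset (ZMod p)) := Finset.mem_univ 0
  have hsplit : ∑ χ : ZMod p, Fc p a b χ * ZMod.stdAddChar (-(χ * v))
      = 1 + ∑ χ ∈ (univ : Finset (ZMod p)).erase 0, Fc p a b χ * ZMod.stdAddChar (-(χ * v)) := by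
    rw [← Finset.add_sum_erase _ _ h0, Fc_zero]
    norm_num
  have hA := lemA p a b v
  rw [hsplit, mul_add, mul_one] at hA
  have hcast : ((|pushBProb b (fz p a) v - 1 / (p : ℝ)| : ℝ) : ℂ)
      = ((‖((pushBProb b (fz p a) v : ℝ) : ℂ) - (p : ℂ)⁻¹‖ : ℝ) : ℂ) := by
    rw [← Real.norm_eq_abs, ← Complex.norm_real]
    push_cast
    ring_nf
  have : |pushBProb b (fz p a) v - 1 / (p : ℝ)|
      = ‖((pushBProb b (fz p a) v : ℝ) : ℂ) - (p : ℂ)⁻¹‖ := by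
    exact_mod_cast hcast
  rw [this, hA]
  have : (p : ℂ)⁻¹ + (p : ℂ)⁻¹ * ∑ χ ∈ (univ : Finset (ZMod p)).erase 0,
      Fc p a b χ * ZMod.stdAddChar (-(χ * v)) - (p : ℂ)⁻¹
      = (p : ℂ)⁻¹ * ∑ χ ∈ (univ : Finset (ZMod p)).erase 0,
          Fc p a b χ * ZMod.stdAddChar (-(χ * v)) := by ring
  rw [this, norm_mul]
  have hnp : ‖(p : ℂ)⁻¹‖ = (p : ℝ)⁻¹ := by
    rw [norm_inv]; norm_num
  rw [hnp]
  refine mul_le_mul_of_nonneg_left ?_ (by positivity)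
  refine (norm_sum_le _ _).trans ?_
  refine Finset.sum_le_sum (fun χ _ => ?_)
  rw [norm_mul, norm_stdAddChar', mul_one]

lemma pushBProb_nonneg (p : ℕ) [NeZero p] {t : ℕ} (a : Fin t → ℤ) {b : ℝ}
    (hb1 : -(1/2) ≤ b) (hb2 : b ≤ 1/2) (v : ZMod p) :
    0 ≤ pushBProb b (fz p a) v := by
  refine Finset.sum_nonneg (fun u _ => Finset.prod_nonneg (fun i _ => ?_))
  split_ifs <;> linarith

lemma pushBProb_total (p : ℕ) [NeZero p] {t : ℕ} (a : Fin t → ℤ) (b : ℝ) :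
    ∑ v : ZMod p, pushBProb b (fz p a) v = 1 := by
  classical
  have h1 : ∑ v : ZMod p, pushBProb b (fz p a) v
      = ∑ u : Fin t → Bool, ∏ i, (if u i then 1/2 - b else 1/2 + b) := by
    simp only [pushBProb]
    exact Finset.sum_fiberwise_of_maps_to (fun u _ => Finset.mem_univ _) _
  rw [h1]
  have key := Finset.prod_univ_sum (fun _ : Fin t => (univ : Finset Bool))
    (fun _i x => if x then (1/2 - b : ℝ) else 1/2 + b)
  rw [Fintype.piFinset_univ] at key
  rw [← key]
  have : ∀ i : Fin t, ∑ x : Bool, (if x then (1/2 - b : ℝ) else 1/2 + b) = 1 := by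
    intro i; rw [Fintype.sum_bool]; norm_num
  rw [Finset.prod_congr rfl (fun i _ => this i), Finset.prod_const_one]

end Stmt18Aux

open Stmt18Aux in
theorem stmt18 :
    ∃ c : ℝ, 0 < c ∧
      ∀ p : ℕ, p.Prime → ∀ t : ℕ, 1 ≤ t →
      ∀ a : Fin t → ℤ, (∀ i, ((a i : ZMod p) ≠ 0)) →
      ∀ b : ℝ, -(1 / 2) ≤ b → b ≤ 1 / 2 →
        -- total variation distance between the law of `Σ aᵢ Xᵢ mod p` and
        -- the uniform distribution on `ZMod p`
        (1 / 2) * ∑' v : ZMod p,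
            |pushBProb b
                (fun u : Fin t → Bool => (((∑ i, if u i then a i else 0) : ℤ) : ZMod p)) v
              - 1 / (p : ℝ)|
          ≤ Real.sqrt p * Real.exp (-c * (t : ℝ) * (1 - 4 * b ^ 2) / (p : ℝ) ^ 2) := by
  classical
  refine ⟨1, one_pos, fun p hp t ht a ha b hb1 hb2 => ?_⟩
  haveI : NeZero p := ⟨hp.ne_zero⟩
  have hfz : (fun u : Fin t → Bool => (((∑ i, if u i then a i else 0) : ℤ) : ZMod p)) = fz p a :=
    rfl
  rw [hfz, tsum_fintype]
  set E := Real.exp (-(t * (1 - 4 * b ^ 2) / (p : ℝ) ^ 2)) with hE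
  have hgoalE : Real.exp (-1 * (t : ℝ) * (1 - 4 * b ^ 2) / (p : ℝ) ^ 2) = E := by
    rw [hE]; ring_nf
  rw [hgoalE]
  have hp0 : (0:ℝ) < p := by exact_mod_cast hp.pos
  have hE0 : 0 < E := Real.exp_pos _
  have hsqp : Real.sqrt p * Real.sqrt p = p := Real.mul_self_sqrt hp0.le
  have hE2 : E ^ 2 = Real.exp (-(2 * t * (1 - 4 * b ^ 2) / (p : ℝ) ^ 2)) := by
    rw [hE, ← Real.exp_nat_mul]; ring_nf
  -- bound 1 : total sum ≤ 2
  have hbound1 : ∑ v : ZMod p, |pushBProb b (fz p a) v - 1 / (p : ℝ)| ≤ 2 := by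
    have hpt : ∀ v : ZMod p, |pushBProb b (fz p a) v - 1 / (p : ℝ)|
        ≤ pushBProb b (fz p a) v + 1 / (p : ℝ) := by
      intro v
      have h1 := pushBProb_nonneg p a hb1 hb2 v
      have h2 : (0:ℝ) < 1 / p := by positivity
      rw [abs_sub_le_iff]
      constructor <;> linarith
    calc ∑ v : ZMod p, |pushBProb b (fz p a) v - 1 / (p : ℝ)|
        ≤ ∑ v : ZMod p, (pushBProb b (fz p a) v + 1 / (p : ℝ)) :=
          Finset.sum_le_sum (fun v _ => hpt v)
      _ = 1 + ∑ _v : ZMod p, 1 / (p:ℝ) := by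
          rw [Finset.sum_add_distrib, pushBProb_total]
      _ = 2 := by
          rw [Finset.sum_const, Finset.card_univ, ZMod.card, nsmul_eq_mul]
          field_simp
          norm_num
  -- bound 2 : total sum ≤ p * E^2
  have hbound2 : ∑ v : ZMod p, |pushBProb b (fz p a) v - 1 / (p : ℝ)| ≤ p * E ^ 2 := by
    have herase : ∑ χ ∈ (univ : Finset (ZMod p)).erase 0, ‖Fc p a b χ‖ ≤ p * E ^ 2 := by
      calc ∑ χ ∈ (univ : Finset (ZMod p)).erase 0, ‖Fc p a b χ‖
          ≤ ∑ _χ ∈ (univ : Finset (ZMod p)).erase 0, E ^ 2 := by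
            refine Finset.sum_le_sum (fun χ hχ => ?_)
            rw [hE2]
            exact Fc_bound hp ha hb1 hb2 (Finset.mem_erase.mp hχ).1
        _ ≤ p * E ^ 2 := by
            rw [Finset.sum_const, nsmul_eq_mul]
            have hcard : ((((univ : Finset (ZMod p)).erase 0).card : ℝ)) ≤ p := by
              have := Finset.card_erase_le (s := (univ : Finset (ZMod p))) (a := (0 : ZMod p))
              have h2 : ((univ : Finset (ZMod p)).card) = p := by
                rw [Finset.card_univ, ZMod.card]
              have : (((univ : Finset (ZMod p)).erase 0).card) ≤ p := by omega
              exact_mod_cast this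
            nlinarith [sq_nonneg E]
    calc ∑ v : ZMod p, |pushBProb b (fz p a) v - 1 / (p : ℝ)|
        ≤ ∑ _v : ZMod p, (p : ℝ)⁻¹ * ∑ χ ∈ (univ : Finset (ZMod p)).erase 0, ‖Fc p a b χ‖ :=
          Finset.sum_le_sum (fun v _ => pointwise p a b v)
      _ = ∑ χ ∈ (univ : Finset (ZMod p)).erase 0, ‖Fc p a b χ‖ := by
          rw [Finset.sum_const, Finset.card_univ, ZMod.card, nsmul_eq_mul]
          field_simp
      _ ≤ p * E ^ 2 := herase
  -- finish
  have hsq0 : 0 ≤ Real.sqrt p * E := by positivity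
  by_cases hcase : 1 ≤ Real.sqrt p * E
  · linarith
  · push_neg at hcase
    have hid : (p : ℝ) * E ^ 2 = (Real.sqrt p * E) * (Real.sqrt p * E) := by
      conv_lhs => rw [← hsqp]
      ring
    nlinarith
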